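/- arXiv:1201.5035 — 2 statements merged into one kernel-verified Lean document; each statement's English description precedes it below -/
import Mathlib

section
/- Let Y be a topological groupoid acting on the left of a locally compact Hausdorff space Ω with fibre map q : Ω → Y⁰, and suppose q is a principal H-bundle for a locally compact Hausdorff topological group H acting continuously, freely and properly on the right of Ω (meaning that q(u) = q(v) if and only if u·H = v·H, so q induces a homeomorphism Ω/H ≅ Y⁰). Assume the actions of Y and H on Ω commute: y·(u·h) = (y·u)·h whenever s(y) = q(u). Then H acts freely and properly on the right of the transformation groupoid Y*Ω by automorphisms, via (y,u)·h = (y, u·h). In particular, the first-coordinate projection π₁ : Y*Ω → Y is a principal H-bundle: the H-orbits in Y*Ω are exactly the fibres of π₁, and π₁ induces a homeomorphism (Y*Ω)/H ≅ Y. -/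
/-! The action `(y, u)·h = (y, u·h)` only moves the `Ω`-coordinate, along `q`-fibres, and commutes
with the action of `Y`; hence it respects ranges, sources, products and inverses of `Y*Ω`, and
freeness and properness pass to it from `Ω`. Since `q` is a principal `H`-bundle, the `H`-orbits
in `Y*Ω` are exactly the fibres of `π₁`, which is an open surjection because `q` is open, hence a
quotient map; so `π₁` descends to a homeomorphism `(Y*Ω)/H ≅ Y`. -/

open MeasureTheory Filter Topology

/-- A topological groupoid: a space `Γ` with a set of units, continuous open range and
source maps onto the units, a (partially meaningful, totalized) continuous multiplication
defined for composable pairs, and a continuous inversion. -/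
structure TopGroupoid (Γ : Type*) [TopologicalSpace Γ] where
  unit : Set Γ
  rng : Γ → Γ
  src : Γ → Γ
  mul : Γ → Γ → Γ
  inv : Γ → Γ
  rng_mem : ∀ x, rng x ∈ unit
  src_mem : ∀ x, src x ∈ unit
  rng_unit : ∀ u ∈ unit, rng u = u
  src_unit : ∀ u ∈ unit, src u = u
  continuous_rng : Continuous rng
  continuous_src : Continuous src
  open_rng : ∀ U : Set Γ, IsOpen U → ∃ V : Set Γ, IsOpen V ∧ rng '' U = V ∩ unit
  open_src : ∀ U : Set Γ, IsOpen U → ∃ V : Set Γ, IsOpen V ∧ src '' U = V ∩ unit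
  continuous_mul : ContinuousOn (fun p : Γ × Γ => mul p.1 p.2) {p : Γ × Γ | src p.1 = rng p.2}
  continuous_inv : Continuous inv
  rng_mul : ∀ x y, src x = rng y → rng (mul x y) = rng x
  src_mul : ∀ x y, src x = rng y → src (mul x y) = src y
  mul_assoc' : ∀ x y z, src x = rng y → src y = rng z → mul (mul x y) z = mul x (mul y z)
  rng_mul_self : ∀ x, mul (rng x) x = x
  mul_src_self : ∀ x, mul x (src x) = x
  inv_inv' : ∀ x, inv (inv x) = x
  src_inv : ∀ x, src (inv x) = rng x
  rng_inv : ∀ x, rng (inv x) = src x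
  inv_mul' : ∀ x, mul (inv x) x = src x
  mul_inv' : ∀ x, mul x (inv x) = rng x

section Actions

variable {Γ : Type*} [TopologicalSpace Γ]

/-- A (continuous) right action of a group `H` on a topological groupoid by automorphisms. -/
structure GroupRightAction (𝒢 : TopGroupoid Γ) (H : Type*) [TopologicalSpace H] [Group H] where
  act : Γ → H → Γ
  continuous_act : Continuous fun p : Γ × H => act p.1 p.2
  act_one : ∀ x, act x 1 = x
  act_mul : ∀ x (h k : H), act (act x h) k = act x (h * k)
  unit_act : ∀ u ∈ 𝒢.unit, ∀ h : H, act u h ∈ 𝒢.unit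
  src_act : ∀ x h, 𝒢.src (act x h) = act (𝒢.src x) h
  rng_act : ∀ x h, 𝒢.rng (act x h) = act (𝒢.rng x) h
  mul_act : ∀ x y h, 𝒢.src x = 𝒢.rng y → 𝒢.mul (act x h) (act y h) = act (𝒢.mul x y) h
  inv_act : ∀ x h, 𝒢.inv (act x h) = act (𝒢.inv x) h

namespace GroupRightAction

variable {𝒢 : TopGroupoid Γ} {H : Type*} [TopologicalSpace H] [Group H]

/-- The action is free. -/
def Free (A : GroupRightAction 𝒢 H) : Prop := ∀ x h, A.act x h = x → h = 1

/-- The action is proper: `(x,h) ↦ (x·h, x)` has compact preimages of compact sets. -/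
def Proper (A : GroupRightAction 𝒢 H) : Prop :=
  ∀ K : Set (Γ × Γ), IsCompact K → IsCompact {p : Γ × H | (A.act p.1 p.2, p.1) ∈ K}

/-- The orbit equivalence relation. -/
def setoid (A : GroupRightAction 𝒢 H) : Setoid Γ where
  r x y := ∃ h : H, A.act x h = y
  iseqv := by
    refine ⟨fun x => ⟨1, A.act_one x⟩, ?_, ?_⟩
    · rintro x y ⟨h, rfl⟩
      exact ⟨h⁻¹, by rw [A.act_mul]; simp [A.act_one]⟩
    · rintro x y z ⟨h, rfl⟩ ⟨k, rfl⟩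
      exact ⟨h * k, (A.act_mul x h k).symm⟩

end GroupRightAction

/-- A (continuous) left action of a group `G` on a topological groupoid by automorphisms. -/
structure GroupLeftAction (𝒢 : TopGroupoid Γ) (G : Type*) [TopologicalSpace G] [Group G] where
  act : G → Γ → Γ
  continuous_act : Continuous fun p : G × Γ => act p.1 p.2
  one_act : ∀ x, act 1 x = x
  act_act : ∀ (t u : G) (x : Γ), act t (act u x) = act (t * u) x
  unit_act : ∀ u ∈ 𝒢.unit, ∀ t : G, act t u ∈ 𝒢.unit
  src_act : ∀ t x, 𝒢.src (act t x) = act t (𝒢.src x)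
  rng_act : ∀ t x, 𝒢.rng (act t x) = act t (𝒢.rng x)
  mul_act : ∀ t x y, 𝒢.src x = 𝒢.rng y → 𝒢.mul (act t x) (act t y) = act t (𝒢.mul x y)
  inv_act : ∀ t x, 𝒢.inv (act t x) = act t (𝒢.inv x)

namespace GroupLeftAction

variable {𝒢 : TopGroupoid Γ} {G : Type*} [TopologicalSpace G] [Group G]

/-- The action is free. -/
def Free (A : GroupLeftAction 𝒢 G) : Prop := ∀ t x, A.act t x = x → t = 1

/-- The action is proper: `(t,x) ↦ (t·x, x)` has compact preimages of compact sets. -/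
def Proper (A : GroupLeftAction 𝒢 G) : Prop :=
  ∀ K : Set (Γ × Γ), IsCompact K → IsCompact {p : G × Γ | (A.act p.1 p.2, p.2) ∈ K}

/-- The orbit equivalence relation. -/
def setoid (A : GroupLeftAction 𝒢 G) : Setoid Γ where
  r x y := ∃ t : G, A.act t x = y
  iseqv := by
    refine ⟨fun x => ⟨1, A.one_act x⟩, ?_, ?_⟩
    · rintro x y ⟨t, rfl⟩
      exact ⟨t⁻¹, by rw [A.act_act]; simp [A.one_act]⟩
    · rintro x y z ⟨t, rfl⟩ ⟨u, rfl⟩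
      exact ⟨u * t, (A.act_act u t x).symm⟩

end GroupLeftAction

/-- A left action of a topological groupoid `𝒢` on a space `Ω`, with fibre map `ρ`. -/
structure GroupoidLeftAction (𝒢 : TopGroupoid Γ) (Ω : Type*) [TopologicalSpace Ω] where
  ρ : Ω → Γ
  act : Γ → Ω → Ω
  ρ_mem : ∀ u, ρ u ∈ 𝒢.unit
  continuous_ρ : Continuous ρ
  ρ_surj : ∀ v ∈ 𝒢.unit, ∃ u, ρ u = v
  open_ρ : ∀ U : Set Ω, IsOpen U → ∃ V : Set Γ, IsOpen V ∧ ρ '' U = V ∩ 𝒢.unit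
  continuous_act : ContinuousOn (fun p : Γ × Ω => act p.1 p.2) {p : Γ × Ω | 𝒢.src p.1 = ρ p.2}
  ρ_act : ∀ x u, 𝒢.src x = ρ u → ρ (act x u) = 𝒢.rng x
  unit_act : ∀ u, act (ρ u) u = u
  act_act : ∀ x y u, 𝒢.src y = ρ u → 𝒢.src x = 𝒢.rng y → act x (act y u) = act (𝒢.mul x y) u

namespace GroupoidLeftAction

variable {𝒢 : TopGroupoid Γ} {Ω : Type*} [TopologicalSpace Ω]

/-- The action is free. -/
def Free (A : GroupoidLeftAction 𝒢 Ω) : Prop :=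
  ∀ x u, 𝒢.src x = A.ρ u → A.act x u = u → x ∈ 𝒢.unit

/-- The action is proper: `(x,u) ↦ (x·u, u)` on the composable set has compact preimages of
compact sets. -/
def Proper (A : GroupoidLeftAction 𝒢 Ω) : Prop :=
  ∀ K : Set (Ω × Ω), IsCompact K →
    IsCompact {p : Γ × Ω | 𝒢.src p.1 = A.ρ p.2 ∧ (A.act p.1 p.2, p.2) ∈ K}

/-- The orbit equivalence relation on `Ω`. -/
def setoid (A : GroupoidLeftAction 𝒢 Ω) : Setoid Ω where
  r u v := ∃ x, 𝒢.src x = A.ρ u ∧ A.act x u = v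
  iseqv := by
    constructor
    · exact fun u => ⟨A.ρ u, 𝒢.src_unit _ (A.ρ_mem u), A.unit_act u⟩
    · rintro u v ⟨x, hx, rfl⟩
      refine ⟨𝒢.inv x, ?_, ?_⟩
      · rw [𝒢.src_inv, A.ρ_act x u hx]
      · rw [A.act_act _ x u hx (𝒢.src_inv x), 𝒢.inv_mul', hx, A.unit_act]
    · rintro u v w ⟨x, hx, rfl⟩ ⟨y, hy, rfl⟩
      have hyr : 𝒢.src y = 𝒢.rng x := by rw [hy, A.ρ_act x u hx]
      refine ⟨𝒢.mul y x, ?_, ?_⟩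
      · rw [𝒢.src_mul y x hyr, hx]
      · rw [← A.act_act y x u hx hyr]

end GroupoidLeftAction

/-- A right action of a topological groupoid `𝒢` on a space `Ω`, with fibre map `σ`. -/
structure GroupoidRightAction (𝒢 : TopGroupoid Γ) (Ω : Type*) [TopologicalSpace Ω] where
  σ : Ω → Γ
  act : Ω → Γ → Ω
  σ_mem : ∀ u, σ u ∈ 𝒢.unit
  continuous_σ : Continuous σ
  σ_surj : ∀ v ∈ 𝒢.unit, ∃ u, σ u = v
  open_σ : ∀ U : Set Ω, IsOpen U → ∃ V : Set Γ, IsOpen V ∧ σ '' U = V ∩ 𝒢.unit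
  continuous_act : ContinuousOn (fun p : Ω × Γ => act p.1 p.2) {p : Ω × Γ | σ p.1 = 𝒢.rng p.2}
  σ_act : ∀ u x, σ u = 𝒢.rng x → σ (act u x) = 𝒢.src x
  unit_act : ∀ u, act u (σ u) = u
  act_act : ∀ u x y, σ u = 𝒢.rng x → 𝒢.src x = 𝒢.rng y → act (act u x) y = act u (𝒢.mul x y)

namespace GroupoidRightAction

variable {𝒢 : TopGroupoid Γ} {Ω : Type*} [TopologicalSpace Ω]

/-- The action is free. -/
def Free (A : GroupoidRightAction 𝒢 Ω) : Prop :=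
  ∀ u x, A.σ u = 𝒢.rng x → A.act u x = u → x ∈ 𝒢.unit

/-- The action is proper. -/
def Proper (A : GroupoidRightAction 𝒢 Ω) : Prop :=
  ∀ K : Set (Ω × Ω), IsCompact K →
    IsCompact {p : Ω × Γ | A.σ p.1 = 𝒢.rng p.2 ∧ (A.act p.1 p.2, p.1) ∈ K}

/-- The orbit equivalence relation on `Ω`. -/
def setoid (A : GroupoidRightAction 𝒢 Ω) : Setoid Ω where
  r u v := ∃ x, A.σ u = 𝒢.rng x ∧ A.act u x = v
  iseqv := by
    constructor
    · exact fun u => ⟨A.σ u, (𝒢.rng_unit _ (A.σ_mem u)).symm, A.unit_act u⟩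
    · rintro u v ⟨x, hx, rfl⟩
      refine ⟨𝒢.inv x, ?_, ?_⟩
      · rw [𝒢.rng_inv, A.σ_act u x hx]
      · rw [A.act_act u x _ hx (𝒢.rng_inv x).symm, 𝒢.mul_inv', ← hx, A.unit_act]
    · rintro u v w ⟨x, hx, rfl⟩ ⟨y, hy, rfl⟩
      have hxy : 𝒢.src x = 𝒢.rng y := by rw [← A.σ_act u x hx, hy]
      refine ⟨𝒢.mul x y, ?_, ?_⟩
      · rw [𝒢.rng_mul x y hxy, hx]
      · rw [A.act_act u x y hx hxy]

end GroupoidRightAction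

end Actions

/-- A left Haar system on a topological groupoid: a family of Radon measures indexed by the
units, with support `r⁻¹(u)`, continuous in `u`, and left invariant. -/
def IsHaarSystem {Γ : Type*} [TopologicalSpace Γ] [MeasurableSpace Γ]
    (𝒢 : TopGroupoid Γ) (lam : Γ → Measure Γ) : Prop :=
  (∀ u ∈ 𝒢.unit, ∀ K : Set Γ, IsCompact K → lam u K < ⊤) ∧
  (∀ u ∈ 𝒢.unit, lam u {x | 𝒢.rng x ≠ u} = 0) ∧
  (∀ u ∈ 𝒢.unit, ∀ V : Set Γ, IsOpen V → (V ∩ 𝒢.rng ⁻¹' {u}).Nonempty → 0 < lam u V) ∧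
  (∀ f : Γ → ℝ, Continuous f → HasCompactSupport f →
    ContinuousOn (fun u => ∫ x, f x ∂(lam u)) 𝒢.unit) ∧
  (∀ x : Γ, ∀ f : Γ → ℝ, Continuous f → HasCompactSupport f →
    ∫ y, f (𝒢.mul x y) ∂(lam (𝒢.src x)) = ∫ y, f y ∂(lam (𝒢.rng x)))

namespace GroupoidLeftAction

variable {Y Ω : Type*} [TopologicalSpace Y] [TopologicalSpace Ω] {𝒴 : TopGroupoid Y}
  (A : GroupoidLeftAction 𝒴 Ω)

/-- The space `Y*Ω` of composable pairs. -/
abbrev ActionDomain := {p : Y × Ω // 𝒴.src p.1 = A.ρ p.2}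

structure IsTransformationGroupoid (TG : TopGroupoid A.ActionDomain) : Prop where
  unit_eq : TG.unit = {z | ∃ u : Ω, z.val = (A.ρ u, u)}
  rng_val : ∀ z, (TG.rng z).val = (𝒴.rng z.val.1, A.act z.val.1 z.val.2)
  src_val : ∀ z, (TG.src z).val = (𝒴.src z.val.1, z.val.2)
  mul_val : ∀ z w, 𝒴.src z.val.1 = 𝒴.rng w.val.1 → z.val.2 = A.act w.val.1 w.val.2 →
    (TG.mul z w).val = (𝒴.mul z.val.1 w.val.1, w.val.2)
  inv_val : ∀ z, (TG.inv z).val = (𝒴.inv z.val.1, A.act z.val.1 z.val.2)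

theorem IsTransformationGroupoid.src_eq_rng_iff {TG : TopGroupoid A.ActionDomain}
    (hTG : A.IsTransformationGroupoid TG) {z w : A.ActionDomain} :
    TG.src z = TG.rng w ↔ 𝒴.src z.val.1 = 𝒴.rng w.val.1 ∧ z.val.2 = A.act w.val.1 w.val.2 := by
  rw [Subtype.ext_iff, hTG.src_val, hTG.rng_val, Prod.ext_iff]

theorem fst_surjective : Function.Surjective fun z : A.ActionDomain => z.val.1 := fun y =>
  let ⟨u, hu⟩ := A.ρ_surj (𝒴.src y) (𝒴.src_mem y)
  ⟨⟨(y, u), hu.symm⟩, rfl⟩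

/-- `π₁` maps the basic open set `(V₁ × V₂) ∩ Y*Ω` onto `V₁ ∩ s⁻¹(q(V₂))`, which is open
because `q` is open onto the units. -/
theorem isOpenMap_fst : IsOpenMap fun z : A.ActionDomain => z.val.1 := by
  have hinducing : IsInducing (Subtype.val : A.ActionDomain → Y × Ω) :=
    IsInducing.subtypeVal
  have hbasis := (TopologicalSpace.isTopologicalBasis_opens.prod
    TopologicalSpace.isTopologicalBasis_opens).isInducing hinducing
  refine hbasis.isOpenMap_iff.mpr ?_
  rintro _ ⟨_, ⟨V₁, hV₁, V₂, hV₂, rfl⟩, rfl⟩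
  obtain ⟨V, hV, hρV⟩ := A.open_ρ V₂ hV₂
  have hsrc_mem : ∀ y, 𝒴.src y ∈ V ↔ ∃ u ∈ V₂, A.ρ u = 𝒴.src y := fun y => by
    rw [← Set.mem_image, hρV]
    exact (and_iff_left (𝒴.src_mem y)).symm
  have himage : (fun z : A.ActionDomain => z.val.1) '' (Subtype.val ⁻¹' V₁ ×ˢ V₂) =
      V₁ ∩ 𝒴.src ⁻¹' V := by
    ext y
    simp only [Set.mem_image, Set.mem_preimage, Set.mem_prod, Set.mem_inter_iff, hsrc_mem]
    constructor
    · rintro ⟨⟨⟨y, u⟩, hyu⟩, ⟨hy, hu⟩, rfl⟩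
      exact ⟨hy, u, hu, hyu.symm⟩
    · rintro ⟨hy, u, hu, hyu⟩
      exact ⟨⟨(y, u), hyu.symm⟩, ⟨hy, hu⟩, rfl⟩
  rw [himage]
  exact hV₁.inter (hV.preimage 𝒴.continuous_src)

theorem isOpenQuotientMap_fst : IsOpenQuotientMap fun z : A.ActionDomain => z.val.1 :=
  ⟨A.fst_surjective, continuous_subtype_val.fst, A.isOpenMap_fst⟩

section GroupAction

variable {H : Type*} {actΩ : Ω → H → Ω} (hρ : ∀ u h, A.ρ (actΩ u h) = A.ρ u)

def domainAct (z : A.ActionDomain) (h : H) : A.ActionDomain :=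
  ⟨(z.val.1, actΩ z.val.2 h), z.prop.trans (hρ _ _).symm⟩

@[simp]
theorem domainAct_val (z : A.ActionDomain) (h : H) :
    (A.domainAct hρ z h).val = (z.val.1, actΩ z.val.2 h) :=
  rfl

theorem continuous_domainAct [TopologicalSpace H]
    (hcont : Continuous fun p : Ω × H => actΩ p.1 p.2) :
    Continuous fun p : A.ActionDomain × H => A.domainAct hρ p.1 p.2 := by
  unfold domainAct
  fun_prop

def IsTransformationGroupoid.groupRightAction [TopologicalSpace H] [Group H]
    {TG : TopGroupoid A.ActionDomain}
    (hTG : A.IsTransformationGroupoid TG)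
    (hcont : Continuous fun p : Ω × H => actΩ p.1 p.2) (hone : ∀ u, actΩ u 1 = u)
    (hmul : ∀ (u : Ω) (h k : H), actΩ (actΩ u h) k = actΩ u (h * k))
    (hcomm : ∀ (y : Y) (u : Ω) (h : H), 𝒴.src y = A.ρ u →
      A.act y (actΩ u h) = actΩ (A.act y u) h) :
    GroupRightAction TG H where
  act := A.domainAct hρ
  continuous_act := A.continuous_domainAct hρ hcont
  act_one z := Subtype.ext <| by simp [hone]
  act_mul z h k := Subtype.ext <| by simp [hmul]
  unit_act z hz h := by
    rw [hTG.unit_eq] at hz ⊢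
    obtain ⟨u, hu⟩ := hz
    exact ⟨actΩ u h, by simp [hu, hρ]⟩
  src_act z h := Subtype.ext <| by simp [hTG.src_val]
  rng_act z h := Subtype.ext <| by simp [hTG.rng_val, hcomm _ _ _ z.prop]
  mul_act z w h hzw := by
    obtain ⟨hzw₁, hzw₂⟩ := (hTG.src_eq_rng_iff A).mp hzw
    have hzw₂' : actΩ z.val.2 h = A.act w.val.1 (actΩ w.val.2 h) := by
      rw [hcomm _ _ _ w.prop, hzw₂]
    apply Subtype.ext
    calc _ = (𝒴.mul z.val.1 w.val.1, actΩ w.val.2 h) :=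
          hTG.mul_val (A.domainAct hρ z h) (A.domainAct hρ w h) hzw₁ hzw₂'
      _ = _ := by rw [domainAct_val, hTG.mul_val z w hzw₁ hzw₂]
  inv_act z h := Subtype.ext <| by simp [hTG.inv_val, hcomm _ _ _ z.prop]

theorem eq_one_of_domainAct_eq [Group H] (hfree : ∀ u h, actΩ u h = u → h = 1)
    {z : A.ActionDomain} {h : H} (hz : A.domainAct hρ z h = z) : h = 1 :=
  hfree _ _ (congrArg (fun z : A.ActionDomain => z.val.2) hz)

/-- The set in question is closed and lies in `π₂(K) × pr_H(P)`, where `P` is the compact set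
that properness of the action on `Ω` attaches to the `Ω`-coordinates of `K`. -/
theorem isCompact_domainAct_preimage [TopologicalSpace H] [T2Space Y] [T2Space Ω]
    (hcont : Continuous fun p : Ω × H => actΩ p.1 p.2)
    (hproper : ∀ K : Set (Ω × Ω), IsCompact K → IsCompact {p : Ω × H | (actΩ p.1 p.2, p.1) ∈ K})
    {K : Set (A.ActionDomain × A.ActionDomain)} (hK : IsCompact K) :
    IsCompact {p : A.ActionDomain × H | (A.domainAct hρ p.1 p.2, p.1) ∈ K} := by
  let sndΩ : A.ActionDomain × A.ActionDomain → Ω × Ω := fun p => (p.1.val.2, p.2.val.2)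
  have hsndΩ : Continuous sndΩ := by fun_prop
  have hP := hproper _ (hK.image hsndΩ)
  refine IsCompact.of_isClosed_subset ((hK.image continuous_snd).prod (hP.image continuous_snd))
    (hK.isClosed.preimage ((A.continuous_domainAct hρ hcont).prodMk continuous_fst)) ?_
  rintro ⟨z, h⟩ hzh
  exact ⟨⟨_, hzh, rfl⟩, (z.val.2, h), ⟨_, hzh, rfl⟩, rfl⟩

theorem exists_domainAct_eq_iff (hprincipal : ∀ u v : Ω, A.ρ u = A.ρ v ↔ ∃ h : H, actΩ u h = v)
    (z z' : A.ActionDomain) : (∃ h : H, A.domainAct hρ z h = z') ↔ z.val.1 = z'.val.1 := by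
  constructor
  · rintro ⟨h, rfl⟩
    rfl
  · intro hfst
    obtain ⟨h, hh⟩ := (hprincipal z.val.2 z'.val.2).mp <|
      z.prop.symm.trans ((congrArg 𝒴.src hfst).trans z'.prop)
    exact ⟨h, Subtype.ext (Prod.ext hfst hh)⟩

end GroupAction

end GroupoidLeftAction

theorem Topology.IsQuotientMap.exists_homeomorph_quotient {X Z : Type*} [TopologicalSpace X]
    [TopologicalSpace Z] {f : X → Z} (hf : IsQuotientMap f) (s : Setoid X)
    (hs : ∀ a b, s a b ↔ f a = f b) : ∃ φ : Quotient s ≃ₜ Z, ∀ x, φ (Quotient.mk s x) = f x := by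
  obtain rfl : s = Setoid.ker f := Setoid.ext hs
  exact ⟨IsQuotientMap.homeomorph (f := ⟨f, hf.continuous⟩) hf, fun _ => rfl⟩

theorem group_acts_on_transformation_groupoid_general
    {Y Ω H : Type*} [TopologicalSpace Y] [T2Space Y]
    [TopologicalSpace Ω] [T2Space Ω]
    [TopologicalSpace H] [Group H]
    (𝒴 : TopGroupoid Y) (A : GroupoidLeftAction 𝒴 Ω)
    (actΩ : Ω → H → Ω)
    (hcont : Continuous fun p : Ω × H => actΩ p.1 p.2)
    (hone : ∀ u, actΩ u 1 = u)
    (hmulΩ : ∀ (u : Ω) (h k : H), actΩ (actΩ u h) k = actΩ u (h * k))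
    (hfree : ∀ u h, actΩ u h = u → h = 1)
    (hproper : ∀ K : Set (Ω × Ω), IsCompact K →
      IsCompact {p : Ω × H | (actΩ p.1 p.2, p.1) ∈ K})
    (hprincipal : ∀ u v : Ω, A.ρ u = A.ρ v ↔ ∃ h : H, actΩ u h = v)
    (hcomm : ∀ (y : Y) (u : Ω) (h : H), 𝒴.src y = A.ρ u →
      A.act y (actΩ u h) = actΩ (A.act y u) h)
    (TG : TopGroupoid {p : Y × Ω // 𝒴.src p.1 = A.ρ p.2})
    (hunit : TG.unit = {z | ∃ u : Ω, z.val = (A.ρ u, u)})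
    (hrng : ∀ z, (TG.rng z).val = (𝒴.rng z.val.1, A.act z.val.1 z.val.2))
    (hsrc : ∀ z, (TG.src z).val = (𝒴.src z.val.1, z.val.2))
    (hmul : ∀ z w, 𝒴.src z.val.1 = 𝒴.rng w.val.1 → z.val.2 = A.act w.val.1 w.val.2 →
      (TG.mul z w).val = (𝒴.mul z.val.1 w.val.1, w.val.2))
    (hinv : ∀ z, (TG.inv z).val = (𝒴.inv z.val.1, A.act z.val.1 z.val.2)) :
    ∃ B : GroupRightAction TG H,
      (∀ (z : {p : Y × Ω // 𝒴.src p.1 = A.ρ p.2}) (h : H),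
        (B.act z h).val = (z.val.1, actΩ z.val.2 h)) ∧
      B.Free ∧ B.Proper ∧
      (∀ z z' : {p : Y × Ω // 𝒴.src p.1 = A.ρ p.2},
        (∃ h : H, B.act z h = z') ↔ z.val.1 = z'.val.1) ∧
      (∃ φ : Quotient B.setoid ≃ₜ Y,
        ∀ z : {p : Y × Ω // 𝒴.src p.1 = A.ρ p.2},
          φ (Quotient.mk B.setoid z) = z.val.1) := by
  have hρ : ∀ u h, A.ρ (actΩ u h) = A.ρ u := fun u h => ((hprincipal u _).mpr ⟨h, rfl⟩).symm
  have hTG : A.IsTransformationGroupoid TG := ⟨hunit, hrng, hsrc, hmul, hinv⟩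
  have horbit := A.exists_domainAct_eq_iff hρ hprincipal
  refine ⟨hTG.groupRightAction A hρ hcont hone hmulΩ hcomm, fun _ _ => rfl,
    fun _ _ => A.eq_one_of_domainAct_eq hρ hfree,
    fun _ => A.isCompact_domainAct_preimage hρ hcont hproper, horbit, ?_⟩
  exact A.isOpenQuotientMap_fst.isQuotientMap.exists_homeomorph_quotient _ horbit

/-- If the fibre map of an action of a groupoid `Y` on `Ω` is a principal
`H`-bundle and the actions of `Y` and `H` commute, then `H` acts freely and properly by
automorphisms on the transformation groupoid `Y*Ω` via `(y,u)·h = (y, u·h)`, and the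
first-coordinate projection is a principal `H`-bundle inducing `(Y*Ω)/H ≅ Y`. -/
theorem group_acts_on_transformation_groupoid
    {Y Ω H : Type*} [TopologicalSpace Y] [T2Space Y] [LocallyCompactSpace Y]
    [TopologicalSpace Ω] [T2Space Ω] [LocallyCompactSpace Ω]
    [TopologicalSpace H] [Group H] [IsTopologicalGroup H] [T2Space H] [LocallyCompactSpace H]
    (𝒴 : TopGroupoid Y) (A : GroupoidLeftAction 𝒴 Ω)
    (actΩ : Ω → H → Ω)
    (hcont : Continuous fun p : Ω × H => actΩ p.1 p.2)
    (hone : ∀ u, actΩ u 1 = u)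
    (hmulΩ : ∀ (u : Ω) (h k : H), actΩ (actΩ u h) k = actΩ u (h * k))
    (hfree : ∀ u h, actΩ u h = u → h = 1)
    (hproper : ∀ K : Set (Ω × Ω), IsCompact K →
      IsCompact {p : Ω × H | (actΩ p.1 p.2, p.1) ∈ K})
    (hprincipal : ∀ u v : Ω, A.ρ u = A.ρ v ↔ ∃ h : H, actΩ u h = v)
    (hcomm : ∀ (y : Y) (u : Ω) (h : H), 𝒴.src y = A.ρ u →
      A.act y (actΩ u h) = actΩ (A.act y u) h)
    (TG : TopGroupoid {p : Y × Ω // 𝒴.src p.1 = A.ρ p.2})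
    (hunit : TG.unit = {z | ∃ u : Ω, z.val = (A.ρ u, u)})
    (hrng : ∀ z, (TG.rng z).val = (𝒴.rng z.val.1, A.act z.val.1 z.val.2))
    (hsrc : ∀ z, (TG.src z).val = (𝒴.src z.val.1, z.val.2))
    (hmul : ∀ z w, 𝒴.src z.val.1 = 𝒴.rng w.val.1 → z.val.2 = A.act w.val.1 w.val.2 →
      (TG.mul z w).val = (𝒴.mul z.val.1 w.val.1, w.val.2))
    (hinv : ∀ z, (TG.inv z).val = (𝒴.inv z.val.1, A.act z.val.1 z.val.2)) :
    ∃ B : GroupRightAction TG H,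
      (∀ (z : {p : Y × Ω // 𝒴.src p.1 = A.ρ p.2}) (h : H),
        (B.act z h).val = (z.val.1, actΩ z.val.2 h)) ∧
      B.Free ∧ B.Proper ∧
      (∀ z z' : {p : Y × Ω // 𝒴.src p.1 = A.ρ p.2},
        (∃ h : H, B.act z h = z') ↔ z.val.1 = z'.val.1) ∧
      (∃ φ : Quotient B.setoid ≃ₜ Y,
        ∀ z : {p : Y × Ω // 𝒴.src p.1 = A.ρ p.2},
          φ (Quotient.mk B.setoid z) = z.val.1) :=
  group_acts_on_transformation_groupoid_general 𝒴 A actΩ hcont hone hmulΩ hfree hproper hprincipal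
    hcomm TG hunit hrng hsrc hmul hinv
end

section
/- Let H be a locally compact Hausdorff topological group acting freely and properly on the right of a topological groupoid Γ by automorphisms, let Γ/H be the quotient groupoid with quotient map q : Γ → Γ/H, and let q₀ : Γ⁰ → Γ⁰/H be the restriction of q to units. Then there is a unique left action of the groupoid Γ/H on the space Γ⁰, with fibre map q₀, satisfying (xH)·s(x) = r(x) for all x ∈ Γ; and with respect to this action the map θ : Γ → (Γ/H)*Γ⁰ defined by θ(x) = (xH, s(x)) is an H-equivariant isomorphism of topological groupoids from Γ onto the transformation groupoid (Γ/H)*Γ⁰, where H acts on (Γ/H)*Γ⁰ by (z,u)·h = (z, u·h). That is, θ is a homeomorphism, θ(xy) = θ(x)θ(y) whenever s(x) = r(y), and θ(x·h) = θ(x)·h for all h ∈ H. -/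
open MeasureTheory Filter Topology

/-! A free and proper action makes `x ↦ (xH, s(x))` a continuous bijection onto the composable
pairs of `(Γ/H) × Γ⁰`; properness turns the preimage of a compact set into a closed subset of
`C·L` for compact `C ⊆ Γ`, `L ⊆ H`, so this bijection is a proper map and hence a homeomorphism.
The action of `Γ/H` on `Γ⁰` is then forced: `z · u` is the range of the unique `x` with
`xH = z` and `s(x) = u`. -/

open Set

theorem IsOpenQuotientMap.exists_isCompact_subset_image {X Y : Type*} [TopologicalSpace X]
    [TopologicalSpace Y] [WeaklyLocallyCompactSpace X] {f : X → Y} (hf : IsOpenQuotientMap f)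
    {K : Set Y} (hK : IsCompact K) : ∃ C, IsCompact C ∧ K ⊆ f '' C := by
  choose N hN_compact hN_nhds using fun x : X => exists_compact_mem_nhds x
  have hcover : K ⊆ ⋃ x, f '' interior (N x) := fun y _ => by
    obtain ⟨x, rfl⟩ := hf.surjective y
    exact mem_iUnion.2 ⟨x, mem_image_of_mem f (mem_interior_iff_mem_nhds.2 (hN_nhds x))⟩
  obtain ⟨t, ht⟩ :=
    hK.elim_finite_subcover _ (fun x => hf.isOpenMap _ isOpen_interior) hcover
  refine ⟨⋃ x ∈ t, N x, t.finite_toSet.isCompact_biUnion fun x _ => hN_compact x, ?_⟩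
  refine ht.trans (iUnion₂_subset fun x hx => image_mono ?_)
  exact interior_subset.trans (subset_biUnion_of_mem (u := N) hx)

theorem TopGroupoid.isClosed_unit {Γ : Type*} [TopologicalSpace Γ] [T2Space Γ]
    (𝒢 : TopGroupoid Γ) : IsClosed 𝒢.unit := by
  have : 𝒢.unit = {x | 𝒢.rng x = x} :=
    Set.ext fun x => ⟨𝒢.rng_unit x, fun hx => hx ▸ 𝒢.rng_mem x⟩
  exact this ▸ isClosed_eq 𝒢.continuous_rng continuous_id

namespace GroupRightAction

variable {Γ H : Type*} [TopologicalSpace Γ] [TopologicalSpace H] [Group H] {𝒢 : TopGroupoid Γ}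
  (RA : GroupRightAction 𝒢 H)

theorem mk_eq_mk_iff {x y : Γ} :
    Quotient.mk RA.setoid x = Quotient.mk RA.setoid y ↔ ∃ h : H, RA.act x h = y :=
  Quotient.eq

theorem mk_act (x : Γ) (h : H) : Quotient.mk RA.setoid (RA.act x h) = Quotient.mk RA.setoid x :=
  ((RA.mk_eq_mk_iff).2 ⟨h, rfl⟩).symm

theorem continuous_act_right (h : H) : Continuous fun x : Γ => RA.act x h :=
  RA.continuous_act.comp (continuous_id.prodMk continuous_const)

theorem isOpenQuotientMap_mk : IsOpenQuotientMap (Quotient.mk RA.setoid) := by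
  refine ⟨Quotient.mk_surjective, continuous_quot_mk, fun U hU => ?_⟩
  have hsaturation : Quotient.mk RA.setoid ⁻¹' (Quotient.mk RA.setoid '' U)
      = ⋃ h : H, (fun x => RA.act x h) ⁻¹' U := by
    ext x
    simp only [mem_preimage, mem_image, mem_iUnion, RA.mk_eq_mk_iff]
    constructor
    · rintro ⟨y, hy, h, rfl⟩
      exact ⟨h⁻¹, by rwa [RA.act_mul, mul_inv_cancel, RA.act_one]⟩
    · rintro ⟨h, hx⟩
      exact ⟨RA.act x h, hx, h⁻¹, by rw [RA.act_mul, mul_inv_cancel, RA.act_one]⟩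
  refine isQuotientMap_quotient_mk'.isOpen_preimage.1 ?_
  change IsOpen (Quotient.mk RA.setoid ⁻¹' (Quotient.mk RA.setoid '' U))
  rw [hsaturation]
  exact isOpen_iUnion fun h => hU.preimage (RA.continuous_act_right h)

theorem isClosed_setOf_mk_eq_mk [T2Space Γ] [LocallyCompactSpace Γ] (hproper : RA.Proper) :
    IsClosed {p : Γ × Γ | Quotient.mk RA.setoid p.1 = Quotient.mk RA.setoid p.2} := by
  have hΦ : IsProperMap fun p : Γ × H => (RA.act p.1 p.2, p.1) :=
    isProperMap_iff_isCompact_preimage.2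
      ⟨RA.continuous_act.prodMk continuous_fst, fun K hK => hproper K hK⟩
  have hrel : {p : Γ × Γ | Quotient.mk RA.setoid p.1 = Quotient.mk RA.setoid p.2}
      = Prod.swap ⁻¹' range fun p : Γ × H => (RA.act p.1 p.2, p.1) := by
    ext ⟨a, b⟩
    simp only [mem_ofPred_eq, mem_preimage, mem_range, Prod.swap_prod_mk, Prod.mk.injEq,
      RA.mk_eq_mk_iff]
    exact ⟨fun ⟨h, hb⟩ => ⟨(a, h), hb, rfl⟩, fun ⟨⟨_, h⟩, hb, ha⟩ => ⟨h, ha ▸ hb⟩⟩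
  rw [hrel]
  exact hΦ.isClosedMap.isClosed_range.preimage continuous_swap

theorem t2Space_quotient [T2Space Γ] [LocallyCompactSpace Γ] (hproper : RA.Proper) :
    T2Space (Quotient RA.setoid) :=
  (t2Space_iff_of_isOpenQuotientMap RA.isOpenQuotientMap_mk).2
    (RA.isClosed_setOf_mk_eq_mk hproper)

theorem mk_image_unit_inter (W : Set Γ) :
    Quotient.mk RA.setoid '' (𝒢.unit ∩ W)
      = Quotient.mk RA.setoid '' W ∩ Quotient.mk RA.setoid '' 𝒢.unit := by
  refine Subset.antisymm (fun _ ⟨w, ⟨hu, hw⟩, hq⟩ => ⟨⟨w, hw, hq⟩, w, hu, hq⟩) ?_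
  rintro _ ⟨⟨w, hw, rfl⟩, u, hu, huw⟩
  obtain ⟨h, rfl⟩ := (RA.mk_eq_mk_iff).1 huw
  exact ⟨RA.act u h, ⟨RA.unit_act u hu h, hw⟩, rfl⟩

theorem eq_of_mk_eq_of_src_eq (hfree : RA.Free) {x y : Γ}
    (hq : Quotient.mk RA.setoid x = Quotient.mk RA.setoid y) (hs : 𝒢.src x = 𝒢.src y) :
    x = y := by
  obtain ⟨h, rfl⟩ := (RA.mk_eq_mk_iff).1 hq
  rw [hfree (𝒢.src x) h (by rw [← RA.src_act, hs]), RA.act_one]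

theorem isCompact_mk_preimage_inter_src_preimage [T2Space Γ] [LocallyCompactSpace Γ]
    (hproper : RA.Proper) {K₁ : Set (Quotient RA.setoid)} {K₂ : Set Γ} (hK₁ : IsCompact K₁)
    (hK₂ : IsCompact K₂) : IsCompact (Quotient.mk RA.setoid ⁻¹' K₁ ∩ 𝒢.src ⁻¹' K₂) := by
  have := RA.t2Space_quotient hproper
  obtain ⟨C, hC, hK₁C⟩ := RA.isOpenQuotientMap_mk.exists_isCompact_subset_image hK₁
  -- the group elements carrying `s(C)` into `K₂`
  set L := Prod.snd '' {p : Γ × H | (RA.act p.1 p.2, p.1) ∈ K₂ ×ˢ (𝒢.src '' C)}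
  have hL : IsCompact L :=
    (hproper _ (hK₂.prod (hC.image 𝒢.continuous_src))).image continuous_snd
  refine ((hC.prod hL).image RA.continuous_act).of_isClosed_subset
    ((hK₁.isClosed.preimage continuous_quot_mk).inter
      (hK₂.isClosed.preimage 𝒢.continuous_src)) ?_
  rintro x ⟨hx₁, hx₂⟩
  obtain ⟨c, hc, hcx⟩ := hK₁C hx₁
  obtain ⟨h, rfl⟩ := (RA.mk_eq_mk_iff).1 hcx
  refine ⟨(c, h), mk_mem_prod hc ⟨(𝒢.src c, h), ?_, rfl⟩, rfl⟩
  exact mk_mem_prod (by rwa [← RA.src_act]) (mem_image_of_mem _ hc)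

variable (Q : TopGroupoid (Quotient RA.setoid))

/-- The space of the transformation groupoid `(Γ/H) * Γ⁰`. -/
abbrev TransformationSpace : Type _ :=
  {p : Quotient RA.setoid × {u : Γ // u ∈ 𝒢.unit} // Q.src p.1 = Quotient.mk RA.setoid p.2.val}

variable {RA Q}

theorem exists_mk_eq_src_eq
    (hQsrc : ∀ x : Γ, Q.src (Quotient.mk RA.setoid x) = Quotient.mk RA.setoid (𝒢.src x))
    {z : Quotient RA.setoid} {u : Γ} (hzu : Q.src z = Quotient.mk RA.setoid u) :
    ∃ x, Quotient.mk RA.setoid x = z ∧ 𝒢.src x = u := by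
  obtain ⟨x, rfl⟩ := Quotient.mk_surjective z
  obtain ⟨h, hh⟩ := (RA.mk_eq_mk_iff).1 (hQsrc x ▸ hzu)
  exact ⟨RA.act x h, RA.mk_act x h, by rw [RA.src_act, hh]⟩

def toTransformation
    (hQsrc : ∀ x : Γ, Q.src (Quotient.mk RA.setoid x) = Quotient.mk RA.setoid (𝒢.src x))
    (x : Γ) : RA.TransformationSpace Q :=
  ⟨(Quotient.mk RA.setoid x, ⟨𝒢.src x, 𝒢.src_mem x⟩), hQsrc x⟩

theorem continuous_toTransformation
    (hQsrc : ∀ x : Γ, Q.src (Quotient.mk RA.setoid x) = Quotient.mk RA.setoid (𝒢.src x)) :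
    Continuous (toTransformation hQsrc) :=
  (continuous_quot_mk.prodMk (𝒢.continuous_src.subtype_mk _)).subtype_mk _

theorem toTransformation_injective
    (hQsrc : ∀ x : Γ, Q.src (Quotient.mk RA.setoid x) = Quotient.mk RA.setoid (𝒢.src x))
    (hfree : RA.Free) :
    Function.Injective (toTransformation hQsrc) := fun _ _ hxy =>
  RA.eq_of_mk_eq_of_src_eq hfree (congrArg (fun p => p.val.1) hxy)
    (congrArg (fun p => p.val.2.val) hxy)

theorem toTransformation_surjective
    (hQsrc : ∀ x : Γ, Q.src (Quotient.mk RA.setoid x) = Quotient.mk RA.setoid (𝒢.src x)) :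
    Function.Surjective (toTransformation hQsrc) := by
  rintro ⟨⟨z, u⟩, hzu⟩
  obtain ⟨x, hxz, hxu⟩ := exists_mk_eq_src_eq hQsrc hzu
  exact ⟨x, Subtype.ext (Prod.ext hxz (Subtype.ext hxu))⟩

theorem isProperMap_toTransformation [T2Space Γ] [LocallyCompactSpace Γ]
    (hQsrc : ∀ x : Γ, Q.src (Quotient.mk RA.setoid x) = Quotient.mk RA.setoid (𝒢.src x))
    (hproper : RA.Proper) : IsProperMap (toTransformation hQsrc) := by
  have := RA.t2Space_quotient hproper
  have := RA.isOpenQuotientMap_mk.locallyCompactSpace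
  have := 𝒢.isClosed_unit.locallyCompactSpace
  have : LocallyCompactSpace (RA.TransformationSpace Q) :=
    (isClosed_eq (Q.continuous_src.comp continuous_fst)
      (continuous_quot_mk.comp (continuous_subtype_val.comp continuous_snd))).locallyCompactSpace
  refine isProperMap_iff_isCompact_preimage.2 ⟨continuous_toTransformation hQsrc, fun K hK => ?_⟩
  refine (RA.isCompact_mk_preimage_inter_src_preimage hproper
    (hK.image (continuous_fst.comp continuous_subtype_val))
    (hK.image (continuous_subtype_val.comp (continuous_snd.comp continuous_subtype_val)))
    ).of_isClosed_subset (hK.isClosed.preimage (continuous_toTransformation hQsrc)) ?_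
  exact fun x hx => ⟨⟨_, hx, rfl⟩, ⟨_, hx, rfl⟩⟩

noncomputable def transformationHomeomorph [T2Space Γ] [LocallyCompactSpace Γ]
    (hQsrc : ∀ x : Γ, Q.src (Quotient.mk RA.setoid x) = Quotient.mk RA.setoid (𝒢.src x))
    (hfree : RA.Free) (hproper : RA.Proper) : Γ ≃ₜ RA.TransformationSpace Q :=
  (Equiv.ofBijective _ ⟨toTransformation_injective hQsrc hfree,
    toTransformation_surjective hQsrc⟩).toHomeomorphOfContinuousClosed
    (continuous_toTransformation hQsrc) (isProperMap_toTransformation hQsrc hproper).isClosedMap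

variable (RA) in
open Classical in
/-- The action of `Γ/H` on `Γ⁰`; off the composable pairs its value is a junk `u`. -/
noncomputable def quotientAct (z : Quotient RA.setoid) (u : {u : Γ // u ∈ 𝒢.unit}) :
    {u : Γ // u ∈ 𝒢.unit} :=
  if h : ∃ x, Quotient.mk RA.setoid x = z ∧ 𝒢.src x = u.val then ⟨𝒢.rng h.choose, 𝒢.rng_mem _⟩
  else u

theorem quotientAct_eq (hfree : RA.Free) {x : Γ} {z : Quotient RA.setoid}
    {u : {u : Γ // u ∈ 𝒢.unit}} (hxz : Quotient.mk RA.setoid x = z) (hxu : 𝒢.src x = u.val) :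
    RA.quotientAct z u = ⟨𝒢.rng x, 𝒢.rng_mem x⟩ := by
  have h : ∃ x, Quotient.mk RA.setoid x = z ∧ 𝒢.src x = u.val := ⟨x, hxz, hxu⟩
  rw [quotientAct, dif_pos h]
  obtain ⟨hz, hu⟩ := h.choose_spec
  exact Subtype.ext (congrArg 𝒢.rng
    (RA.eq_of_mk_eq_of_src_eq hfree (hz.trans hxz.symm) (hu.trans hxu.symm)))

theorem quotientAct_mk_src (hfree : RA.Free) (x : Γ) :
    RA.quotientAct (Quotient.mk RA.setoid x) ⟨𝒢.src x, 𝒢.src_mem x⟩ = ⟨𝒢.rng x, 𝒢.rng_mem x⟩ :=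
  quotientAct_eq hfree rfl rfl

theorem continuousOn_quotientAct [T2Space Γ] [LocallyCompactSpace Γ]
    (hQsrc : ∀ x : Γ, Q.src (Quotient.mk RA.setoid x) = Quotient.mk RA.setoid (𝒢.src x))
    (hfree : RA.Free) (hproper : RA.Proper) :
    ContinuousOn (fun p : Quotient RA.setoid × {u : Γ // u ∈ 𝒢.unit} => RA.quotientAct p.1 p.2)
      {p | Q.src p.1 = Quotient.mk RA.setoid p.2.val} := by
  set θ := transformationHomeomorph hQsrc hfree hproper
  have hθ : ∀ p, (θ (θ.symm p)).val = p.val := fun p => by rw [θ.apply_symm_apply]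
  have hrestrict : domRestrict {p | Q.src p.1 = Quotient.mk RA.setoid p.2.val}
      (fun p : Quotient RA.setoid × {u : Γ // u ∈ 𝒢.unit} => RA.quotientAct p.1 p.2)
      = fun p => ⟨𝒢.rng (θ.symm p), 𝒢.rng_mem _⟩ :=
    funext fun p => quotientAct_eq hfree (congrArg Prod.fst (hθ p))
      (congrArg (fun q => q.2.val) (hθ p))
  rw [continuousOn_iff_continuous_domRestrict, hrestrict]
  exact (𝒢.continuous_rng.comp θ.symm.continuous).subtype_mk _

noncomputable def quotientGroupoidAction [T2Space Γ] [LocallyCompactSpace Γ]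
    (hQunit : Q.unit = Quotient.mk RA.setoid '' 𝒢.unit)
    (hQrng : ∀ x : Γ, Q.rng (Quotient.mk RA.setoid x) = Quotient.mk RA.setoid (𝒢.rng x))
    (hQsrc : ∀ x : Γ, Q.src (Quotient.mk RA.setoid x) = Quotient.mk RA.setoid (𝒢.src x))
    (hQmul : ∀ x y : Γ, 𝒢.src x = 𝒢.rng y →
      Q.mul (Quotient.mk RA.setoid x) (Quotient.mk RA.setoid y)
        = Quotient.mk RA.setoid (𝒢.mul x y))
    (hfree : RA.Free) (hproper : RA.Proper) : GroupoidLeftAction Q {u : Γ // u ∈ 𝒢.unit} where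
  ρ u := Quotient.mk RA.setoid u.val
  act := RA.quotientAct
  ρ_mem u := hQunit ▸ mem_image_of_mem _ u.prop
  continuous_ρ := continuous_quot_mk.comp continuous_subtype_val
  ρ_surj v hv := by
    obtain ⟨u, hu, rfl⟩ := hQunit ▸ hv
    exact ⟨⟨u, hu⟩, rfl⟩
  open_ρ U hU := by
    obtain ⟨W, hW, rfl⟩ := isOpen_induced_iff.1 hU
    refine ⟨_, RA.isOpenQuotientMap_mk.isOpenMap W hW, ?_⟩
    rw [hQunit, ← RA.mk_image_unit_inter, ← Subtype.image_preimage_coe, image_image]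
  continuous_act := continuousOn_quotientAct hQsrc hfree hproper
  ρ_act z u hzu := by
    obtain ⟨x, rfl, hxu⟩ := exists_mk_eq_src_eq hQsrc hzu
    rw [quotientAct_eq hfree rfl hxu, hQrng]
  unit_act u := by
    rw [quotientAct_eq hfree rfl (𝒢.src_unit u.val u.prop)]
    exact Subtype.ext (𝒢.rng_unit u.val u.prop)
  act_act z₁ z₂ u h₂ h₁₂ := by
    obtain ⟨x₂, rfl, hx₂⟩ := exists_mk_eq_src_eq hQsrc h₂
    obtain ⟨x₁, rfl, hx₁⟩ := exists_mk_eq_src_eq hQsrc (h₁₂.trans (hQrng x₂))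
    rw [quotientAct_eq hfree rfl hx₂, quotientAct_eq hfree rfl hx₁, hQmul x₁ x₂ hx₁,
      quotientAct_eq hfree rfl (by rw [𝒢.src_mul x₁ x₂ hx₁, hx₂])]
    exact Subtype.ext (𝒢.rng_mul x₁ x₂ hx₁).symm

end GroupRightAction

theorem principal_groupoid_structure_theorem_general
    {Γ H : Type*} [TopologicalSpace Γ] [T2Space Γ] [LocallyCompactSpace Γ]
    [TopologicalSpace H] [Group H]
    (𝒢 : TopGroupoid Γ) (RA : GroupRightAction 𝒢 H)
    (hfree : RA.Free) (hproper : RA.Proper)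
    (Q : TopGroupoid (Quotient RA.setoid))
    (hQunit : Q.unit = Quotient.mk RA.setoid '' 𝒢.unit)
    (hQrng : ∀ x : Γ, Q.rng (Quotient.mk RA.setoid x) = Quotient.mk RA.setoid (𝒢.rng x))
    (hQsrc : ∀ x : Γ, Q.src (Quotient.mk RA.setoid x) = Quotient.mk RA.setoid (𝒢.src x))
    (hQmul : ∀ x y : Γ, 𝒢.src x = 𝒢.rng y →
      Q.mul (Quotient.mk RA.setoid x) (Quotient.mk RA.setoid y)
        = Quotient.mk RA.setoid (𝒢.mul x y)) :
    (∃ B : GroupoidLeftAction Q {u : Γ // u ∈ 𝒢.unit},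
      (∀ u : {u : Γ // u ∈ 𝒢.unit}, B.ρ u = Quotient.mk RA.setoid u.val) ∧
      (∀ x : Γ, B.act (Quotient.mk RA.setoid x) ⟨𝒢.src x, 𝒢.src_mem x⟩
        = ⟨𝒢.rng x, 𝒢.rng_mem x⟩) ∧
      (∀ B' : GroupoidLeftAction Q {u : Γ // u ∈ 𝒢.unit},
        (∀ u : {u : Γ // u ∈ 𝒢.unit}, B'.ρ u = Quotient.mk RA.setoid u.val) →
        (∀ x : Γ, B'.act (Quotient.mk RA.setoid x) ⟨𝒢.src x, 𝒢.src_mem x⟩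
          = ⟨𝒢.rng x, 𝒢.rng_mem x⟩) →
        ∀ (z : Quotient RA.setoid) (u : {u : Γ // u ∈ 𝒢.unit}),
          Q.src z = Quotient.mk RA.setoid u.val → B'.act z u = B.act z u)) ∧
    (∃ θ : Γ ≃ₜ {p : Quotient RA.setoid × {u : Γ // u ∈ 𝒢.unit} //
        Q.src p.1 = Quotient.mk RA.setoid p.2.val},
      (∀ x : Γ, (θ x).val = (Quotient.mk RA.setoid x, ⟨𝒢.src x, 𝒢.src_mem x⟩)) ∧
      (∀ x y : Γ, 𝒢.src x = 𝒢.rng y →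
        (θ (𝒢.mul x y)).val
          = (Q.mul (Quotient.mk RA.setoid x) (Quotient.mk RA.setoid y),
              ⟨𝒢.src y, 𝒢.src_mem y⟩)) ∧
      (∀ (x : Γ) (h : H),
        (θ (RA.act x h)).val
          = (Quotient.mk RA.setoid x,
              ⟨RA.act (𝒢.src x) h, RA.unit_act _ (𝒢.src_mem x) h⟩))) := by
  refine ⟨⟨RA.quotientGroupoidAction hQunit hQrng hQsrc hQmul hfree hproper, fun _ => rfl,
    GroupRightAction.quotientAct_mk_src hfree, ?_⟩,
    GroupRightAction.transformationHomeomorph hQsrc hfree hproper, fun _ => rfl, ?_, ?_⟩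
  · intro B' _ hB' z u hzu
    obtain ⟨x, rfl, hxu⟩ := GroupRightAction.exists_mk_eq_src_eq hQsrc hzu
    obtain rfl : u = ⟨𝒢.src x, 𝒢.src_mem x⟩ := Subtype.ext hxu.symm
    exact (hB' x).trans (GroupRightAction.quotientAct_mk_src hfree x).symm
  · intro x y hxy
    exact Prod.ext (hQmul x y hxy).symm (Subtype.ext (𝒢.src_mul x y hxy))
  · intro x h
    exact Prod.ext (RA.mk_act x h) (Subtype.ext (RA.src_act x h))

/-- (Structure theorem.) A free and proper action of `H` on a groupoid
`Γ` exhibits `Γ` as the transformation groupoid `(Γ/H)*Γ⁰` for a canonical action of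
`Γ/H` on `Γ⁰` with `(xH)·s(x) = r(x)`, via the `H`-equivariant isomorphism
`θ(x) = (xH, s(x))`. -/
theorem principal_groupoid_structure_theorem
    {Γ H : Type*} [TopologicalSpace Γ] [T2Space Γ] [LocallyCompactSpace Γ]
    [TopologicalSpace H] [Group H] [IsTopologicalGroup H] [T2Space H] [LocallyCompactSpace H]
    (𝒢 : TopGroupoid Γ) (RA : GroupRightAction 𝒢 H)
    (hfree : RA.Free) (hproper : RA.Proper)
    (Q : TopGroupoid (Quotient RA.setoid))
    (hQunit : Q.unit = Quotient.mk RA.setoid '' 𝒢.unit)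
    (hQrng : ∀ x : Γ, Q.rng (Quotient.mk RA.setoid x) = Quotient.mk RA.setoid (𝒢.rng x))
    (hQsrc : ∀ x : Γ, Q.src (Quotient.mk RA.setoid x) = Quotient.mk RA.setoid (𝒢.src x))
    (hQmul : ∀ x y : Γ, 𝒢.src x = 𝒢.rng y →
      Q.mul (Quotient.mk RA.setoid x) (Quotient.mk RA.setoid y)
        = Quotient.mk RA.setoid (𝒢.mul x y))
    (hQinv : ∀ x : Γ, Q.inv (Quotient.mk RA.setoid x) = Quotient.mk RA.setoid (𝒢.inv x)) :
    (∃ B : GroupoidLeftAction Q {u : Γ // u ∈ 𝒢.unit},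
      (∀ u : {u : Γ // u ∈ 𝒢.unit}, B.ρ u = Quotient.mk RA.setoid u.val) ∧
      (∀ x : Γ, B.act (Quotient.mk RA.setoid x) ⟨𝒢.src x, 𝒢.src_mem x⟩
        = ⟨𝒢.rng x, 𝒢.rng_mem x⟩) ∧
      (∀ B' : GroupoidLeftAction Q {u : Γ // u ∈ 𝒢.unit},
        (∀ u : {u : Γ // u ∈ 𝒢.unit}, B'.ρ u = Quotient.mk RA.setoid u.val) →
        (∀ x : Γ, B'.act (Quotient.mk RA.setoid x) ⟨𝒢.src x, 𝒢.src_mem x⟩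
          = ⟨𝒢.rng x, 𝒢.rng_mem x⟩) →
        ∀ (z : Quotient RA.setoid) (u : {u : Γ // u ∈ 𝒢.unit}),
          Q.src z = Quotient.mk RA.setoid u.val → B'.act z u = B.act z u)) ∧
    (∃ θ : Γ ≃ₜ {p : Quotient RA.setoid × {u : Γ // u ∈ 𝒢.unit} //
        Q.src p.1 = Quotient.mk RA.setoid p.2.val},
      (∀ x : Γ, (θ x).val = (Quotient.mk RA.setoid x, ⟨𝒢.src x, 𝒢.src_mem x⟩)) ∧
      (∀ x y : Γ, 𝒢.src x = 𝒢.rng y →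
        (θ (𝒢.mul x y)).val
          = (Q.mul (Quotient.mk RA.setoid x) (Quotient.mk RA.setoid y),
              ⟨𝒢.src y, 𝒢.src_mem y⟩)) ∧
      (∀ (x : Γ) (h : H),
        (θ (RA.act x h)).val
          = (Quotient.mk RA.setoid x,
              ⟨RA.act (𝒢.src x) h, RA.unit_act _ (𝒢.src_mem x) h⟩))) :=
  principal_groupoid_structure_theorem_general 𝒢 RA hfree hproper Q hQunit hQrng hQsrc hQmul
end
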